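/- arXiv:1710.11402 — 3 statements merged into one kernel-verified Lean document; each statement's English description precedes it below -/
import Mathlib

section
/- Principle of one large jump for Boolean convolutions: let μ be a probability measure on [0,∞) with distribution function F satisfying 1 − F(y) > 0 for all y ≥ 0. Assume μ is Boolean-subexponential, i.e. for every integer n ≥ 1, every probability measure ρ_n on ℝ with K_{ρ_n}(z) = n·K_μ(z) for all z ∈ ℂ⁺ satisfies ρ_n(y,∞)/(n(1 − F(y))) → 1 as y → ∞. Then for every n ≥ 1 and every such ρ_n, ρ_n(y,∞)/(1 − F^{∨∪n}(y)) → 1 as y → ∞, where F^{∨∪n}(y) = F(y)/(n − (n−1)F(y)) is the n-fold Boolean max convolution power of F. -/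
open MeasureTheory Filter Set Complex

noncomputable section

/-- The Cauchy transform of a measure `τ` on `ℝ`: `G_τ(z) = ∫ 1/(z − t) dτ(t)`. -/
def cauchyG (τ : Measure ℝ) (z : ℂ) : ℂ := ∫ t, (z - (t : ℂ))⁻¹ ∂τ

/-- The K-transform `K_τ(z) = z − 1/G_τ(z)`. -/
def Ktrans (τ : Measure ℝ) (z : ℂ) : ℂ := z - (cauchyG τ z)⁻¹

/-- `μ` has a regularly varying tail of index `−α`. -/
def RegVarTail (μ : Measure ℝ) (α : ℝ) : Prop :=
  (∀ x : ℝ, 0 ≤ x → 0 < μ (Set.Ioi x)) ∧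
  ∀ t : ℝ, 0 < t →
    Filter.Tendsto (fun x : ℝ => (μ (Set.Ioi (t * x))).toReal / (μ (Set.Ioi x)).toReal)
      Filter.atTop (nhds (t ^ (-α)))

/-!
Writing `F^{∨∪n} = F / g` with `g = n − (n−1)F`, the Boolean max tail is
`1 − F^{∨∪n} = n(1 − F) / g`. Since `F → 1`, also `g → 1`, so the ratio in the conclusion
differs from the Boolean-subexponential ratio `ρ(y,∞) / (n(1 − F(y)))` only by the factor `g(y) → 1`.
-/

theorem one_sub_div_sub_sub_one_mul {K : Type*} [Field K] {a x : K}
    (h : a - (a - 1) * x ≠ 0) :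
    1 - x / (a - (a - 1) * x) = a * (1 - x) / (a - (a - 1) * x) := by
  rw [eq_div_iff h, sub_mul, one_mul, div_mul_cancel₀ _ h]
  ring

theorem Filter.Tendsto.div_div_of_tendsto_one {α : Type*} {l : Filter α} {f g h : α → ℝ}
    (hfg : Tendsto (fun x => f x / g x) l (nhds 1)) (hh : Tendsto h l (nhds 1)) :
    Tendsto (fun x => f x / (g x / h x)) l (nhds 1) := by
  simpa only [div_div_eq_mul_div, mul_div_right_comm, mul_one] using hfg.mul hh

theorem boolean_one_large_jump_general
    (μ : Measure ℝ) [IsProbabilityMeasure μ]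
    (F : ℝ → ℝ) (hF : F = fun y : ℝ => (μ (Set.Iic y)).toReal)
    (hsub : ∀ n : ℕ, 1 ≤ n → ∀ ρ : Measure ℝ, IsProbabilityMeasure ρ →
      (∀ z : ℂ, 0 < z.im → Ktrans ρ z = (n : ℂ) * Ktrans μ z) →
      Filter.Tendsto
        (fun y : ℝ => (ρ (Set.Ioi y)).toReal / ((n : ℝ) * (1 - F y)))
        Filter.atTop (nhds 1))
    (n : ℕ) (hn : 1 ≤ n)
    (ρ : Measure ℝ) [IsProbabilityMeasure ρ]
    (hK : ∀ z : ℂ, 0 < z.im → Ktrans ρ z = (n : ℂ) * Ktrans μ z) :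
    Filter.Tendsto
      (fun y : ℝ => (ρ (Set.Ioi y)).toReal /
        (1 - F y / ((n : ℝ) - ((n : ℝ) - 1) * F y)))
      Filter.atTop (nhds 1) := by
  have hF_eq_cdf : F = ProbabilityTheory.cdf μ := by
    ext y
    rw [hF, ProbabilityTheory.cdf_eq_real, measureReal_def]
  have hF_tendsto : Tendsto F atTop (nhds 1) :=
    hF_eq_cdf ▸ ProbabilityTheory.tendsto_cdf_atTop μ
  have hg_tendsto : Tendsto (fun y => (n : ℝ) - ((n : ℝ) - 1) * F y) atTop (nhds 1) := by
    simpa using (tendsto_const_nhds (x := (n : ℝ))).sub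
      ((tendsto_const_nhds (x := (n : ℝ) - 1)).mul hF_tendsto)
  refine ((hsub n hn ρ ‹_› hK).div_div_of_tendsto_one hg_tendsto).congr' ?_
  filter_upwards [hg_tendsto.eventually_ne one_ne_zero] with y hy
  rw [one_sub_div_sub_sub_one_mul hy]

/-- the principle of one large jump for Boolean-subexponential distributions. -/
theorem boolean_one_large_jump
    (μ : Measure ℝ) [IsProbabilityMeasure μ] (hsupp : μ (Set.Iio (0 : ℝ)) = 0)
    (F : ℝ → ℝ) (hF : F = fun y : ℝ => (μ (Set.Iic y)).toReal)
    (hpos : ∀ y : ℝ, 0 ≤ y → 0 < 1 - F y)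
    (hsub : ∀ n : ℕ, 1 ≤ n → ∀ ρ : Measure ℝ, IsProbabilityMeasure ρ →
      (∀ z : ℂ, 0 < z.im → Ktrans ρ z = (n : ℂ) * Ktrans μ z) →
      Filter.Tendsto
        (fun y : ℝ => (ρ (Set.Ioi y)).toReal / ((n : ℝ) * (1 - F y)))
        Filter.atTop (nhds 1))
    (n : ℕ) (hn : 1 ≤ n)
    (ρ : Measure ℝ) [IsProbabilityMeasure ρ]
    (hK : ∀ z : ℂ, 0 < z.im → Ktrans ρ z = (n : ℂ) * Ktrans μ z) :
    Filter.Tendsto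
      (fun y : ℝ => (ρ (Set.Ioi y)).toReal /
        (1 - F y / ((n : ℝ) - ((n : ℝ) - 1) * F y)))
      Filter.atTop (nhds 1) :=
  boolean_one_large_jump_general μ F hF hsub n hn ρ hK
end
end

section
/- Let α ≥ 0 and let F be the distribution function of a probability measure on [0,∞) with regularly varying tail of index −α (i.e. 1 − F(x) > 0 for all x and (1 − F(tx))/(1 − F(x)) → t^{−α} as x → ∞ for all t > 0). Then for every integer n ≥ 1, as y → ∞ the tails of the n-fold Boolean max, free max and classical max convolution powers of F are asymptotically equivalent: 1 − F(y)/(n − (n−1)F(y)) ~ 1 − max(nF(y) − (n−1), 0) ~ 1 − F(y)^n ~ n(1 − F(y)), where u(y) ~ v(y) means u(y)/v(y) → 1 as y → ∞. -/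
open MeasureTheory Filter

/-!
Write `ε = 1 - F y`, which is nonzero and tends to `0` as `y → ∞`. The three tails are exactly
`n ε / (1 + (n - 1) ε)`, eventually `n ε` (once `n F y ≥ n - 1`), and
`ε (1 + F y + ⋯ + F y ^ (n - 1))`, so each ratio to `n ε` tends to `1`.
-/

section TailRatios

variable {ι : Type*} {l : Filter ι} {F : ι → ℝ}

theorem boolean_tail_ratio_eq {n x : ℝ} (hn : n ≠ 0) (hx : x ≠ 1)
    (hd : n - (n - 1) * x ≠ 0) :
    (1 - x / (n - (n - 1) * x)) / (n * (1 - x)) = 1 / (n - (n - 1) * x) := by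
  have h1 : 1 - x ≠ 0 := sub_ne_zero.mpr hx.symm
  rw [one_sub_div hd, show n - (n - 1) * x - x = n * (1 - x) by ring, div_right_comm,
    div_self (mul_ne_zero hn h1)]

theorem tendsto_boolean_tail_ratio (hF : Tendsto F l (nhds 1)) (hF1 : ∀ᶠ i in l, F i ≠ 1)
    {n : ℝ} (hn : n ≠ 0) :
    Tendsto (fun i => (1 - F i / (n - (n - 1) * F i)) / (n * (1 - F i))) l (nhds 1) := by
  have hd : Tendsto (fun i => n - (n - 1) * F i) l (nhds 1) := by
    convert tendsto_const_nhds.sub (tendsto_const_nhds.mul hF) using 2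
    ring
  have hd0 : ∀ᶠ i in l, n - (n - 1) * F i ≠ 0 := hd.eventually_ne one_ne_zero
  have hinv : Tendsto (fun i => (n - (n - 1) * F i)⁻¹) l (nhds 1) := by
    simpa using hd.inv₀ one_ne_zero
  refine hinv.congr' ?_
  filter_upwards [hF1, hd0] with i hi hdi
  rw [boolean_tail_ratio_eq hn hi hdi, one_div]

theorem tendsto_free_tail_ratio (hF : Tendsto F l (nhds 1)) (hF1 : ∀ᶠ i in l, F i ≠ 1)
    {n : ℝ} (hn : n ≠ 0) :
    Tendsto (fun i => (1 - max (n * F i - (n - 1)) 0) / (n * (1 - F i))) l (nhds 1) := by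
  have hlin : Tendsto (fun i => n * F i - (n - 1)) l (nhds 1) := by
    convert (tendsto_const_nhds.mul hF).sub (tendsto_const_nhds (x := n - 1)) using 2
    ring
  refine tendsto_const_nhds.congr' ?_
  filter_upwards [hF1, hlin.eventually (eventually_ge_nhds zero_lt_one)] with i hi hnonneg
  have h1 : 1 - F i ≠ 0 := sub_ne_zero.mpr hi.symm
  rw [max_eq_left hnonneg, show 1 - (n * F i - (n - 1)) = n * (1 - F i) by ring,
    div_self (mul_ne_zero hn h1)]

theorem tendsto_classical_tail_ratio (hF : Tendsto F l (nhds 1)) (hF1 : ∀ᶠ i in l, F i ≠ 1)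
    {n : ℕ} (hn : n ≠ 0) :
    Tendsto (fun i => (1 - F i ^ n) / (n * (1 - F i))) l (nhds 1) := by
  have hsum : Tendsto (fun i => ∑ k ∈ Finset.range n, F i ^ k) l (nhds (n : ℝ)) := by
    simpa using tendsto_finsetSum (Finset.range n) fun k _ => hF.pow k
  have hn' : (n : ℝ) ≠ 0 := Nat.cast_ne_zero.mpr hn
  have hmean : Tendsto (fun i => (∑ k ∈ Finset.range n, F i ^ k) / n) l (nhds 1) := by
    simpa [hn'] using hsum.div_const (n : ℝ)
  refine hmean.congr' ?_
  filter_upwards [hF1] with i hi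
  rw [geom_sum_eq hi]
  field_simp
  ring

end TailRatios

theorem max_convolution_tail_equivalence_general
    (μ : Measure ℝ) [IsProbabilityMeasure μ]
    (F : ℝ → ℝ) (hF : F = fun y : ℝ => (μ (Set.Iic y)).toReal)
    (hpos : ∀ x : ℝ, 0 < 1 - F x)
    (n : ℕ) (hn : 1 ≤ n) :
    Filter.Tendsto
      (fun y : ℝ => (1 - F y / ((n : ℝ) - ((n : ℝ) - 1) * F y)) / ((n : ℝ) * (1 - F y)))
      Filter.atTop (nhds 1) ∧
    Filter.Tendsto
      (fun y : ℝ => (1 - max ((n : ℝ) * F y - ((n : ℝ) - 1)) 0) / ((n : ℝ) * (1 - F y)))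
      Filter.atTop (nhds 1) ∧
    Filter.Tendsto
      (fun y : ℝ => (1 - (F y) ^ n) / ((n : ℝ) * (1 - F y)))
      Filter.atTop (nhds 1) := by
  have hlim : Tendsto F atTop (nhds 1) := by
    have hcdf : F = ProbabilityTheory.cdf μ := by
      ext y
      rw [hF, ProbabilityTheory.cdf_eq_real, measureReal_def]
    exact hcdf ▸ ProbabilityTheory.tendsto_cdf_atTop μ
  have hne : ∀ᶠ y in atTop, F y ≠ 1 := Eventually.of_forall fun y => (sub_pos.mp (hpos y)).ne
  have hn0 : n ≠ 0 := Nat.one_le_iff_ne_zero.mp hn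
  have hn0' : (n : ℝ) ≠ 0 := Nat.cast_ne_zero.mpr hn0
  exact ⟨tendsto_boolean_tail_ratio hlim hne hn0', tendsto_free_tail_ratio hlim hne hn0',
    tendsto_classical_tail_ratio hlim hne hn0⟩

/-- asymptotic equivalence of the tails of the Boolean max, free max and
classical max convolution powers of a regularly varying distribution function. -/
theorem max_convolution_tail_equivalence
    (α : ℝ) (hα : 0 ≤ α)
    (μ : Measure ℝ) [IsProbabilityMeasure μ] (hsupp : μ (Set.Iio (0 : ℝ)) = 0)
    (F : ℝ → ℝ) (hF : F = fun y : ℝ => (μ (Set.Iic y)).toReal)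
    (hpos : ∀ x : ℝ, 0 < 1 - F x)
    (hreg : ∀ t : ℝ, 0 < t →
      Filter.Tendsto (fun x : ℝ => (1 - F (t * x)) / (1 - F x))
        Filter.atTop (nhds (t ^ (-α))))
    (n : ℕ) (hn : 1 ≤ n) :
    Filter.Tendsto
      (fun y : ℝ => (1 - F y / ((n : ℝ) - ((n : ℝ) - 1) * F y)) / ((n : ℝ) * (1 - F y)))
      Filter.atTop (nhds 1) ∧
    Filter.Tendsto
      (fun y : ℝ => (1 - max ((n : ℝ) * F y - ((n : ℝ) - 1)) 0) / ((n : ℝ) * (1 - F y)))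
      Filter.atTop (nhds 1) ∧
    Filter.Tendsto
      (fun y : ℝ => (1 - (F y) ^ n) / ((n : ℝ) * (1 - F y)))
      Filter.atTop (nhds 1) :=
  max_convolution_tail_equivalence_general μ F hF hpos n hn
end

section
/- Stability of the class Z_{1,p} under z ↦ A/(1±A): let p ≥ 1 be an integer and let A be an analytic function whose domain contains, for every κ > 0, a cone Δ_{κ,δ} for some δ = δ(κ) > 0. Suppose there are real numbers a₁, …, a_p such that r_A(z) := z^{−p}(A(z) − Σ_{j=1}^p a_j z^j) satisfies: z/r_A(z) → 0 and r_A(z) → 0 as z → 0 n.t., and Re r_A(−i y^{−1})/Im r_A(−i y^{−1}) converges to a nonzero finite limit as y → ∞. Let B(z) = A(z)/(1+A(z)) or B(z) = A(z)/(1−A(z)). Then there exist real numbers b₁, …, b_p such that r_B(z) := z^{−p}(B(z) − Σ_{j=1}^p b_j z^j) satisfies the same three conditions; moreover r_B(z)/r_A(z) → 1 as z → 0 n.t., Re r_B(−i y^{−1})/Re r_A(−i y^{−1}) → 1 and Im r_B(−i y^{−1})/Im r_A(−i y^{−1}) → 1 as y → ∞. -/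
open Filter Set Complex

noncomputable section

/-- The cone `Δ_{κ,δ} = {z ∈ ℂ : Im z < 0, |Re z| < −κ·Im z, |z| < δ}`. -/
def coneLower (κ δ : ℝ) : Set ℂ :=
  {z : ℂ | z.im < 0 ∧ |z.re| < -κ * z.im ∧ ‖z‖ < δ}

/-- Non-tangential convergence `f(z) → L` as `z → 0` n.t. -/
def NTtendsto (f : ℂ → ℂ) (L : ℂ) : Prop :=
  ∀ κ : ℝ, 0 < κ → ∀ ε : ℝ, 0 < ε → ∃ δ : ℝ, 0 < δ ∧
    ∀ z ∈ coneLower κ δ, ‖f z - L‖ < ε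

/-- The remainder of `A` relative to the polynomial with coefficients `a₁, …, a_p`:
`r_A(z) = z^{−p}(A(z) − ∑_{j=1}^p a_j z^j)`. -/
def remainder (A : ℂ → ℂ) (p : ℕ) (a : ℕ → ℝ) (z : ℂ) : ℂ :=
  (A z - ∑ j ∈ Finset.Icc 1 p, (a j : ℂ) * z ^ j) / z ^ p

/-- Evaluation of a function at the boundary point `−i y⁻¹`. -/
def ntEval (f : ℂ → ℂ) (y : ℝ) : ℂ := f (-Complex.I * (y : ℂ)⁻¹)

/-!
Write `B = A/(1 + σA)` with `σ = ±1` and `A = P_a + z^p r_A`. If `Q = ∑ b_j z^j` is the truncation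
at degree `p` of `P_a/(1 + σP_a)`, then `Q(1 + σP_a) = P_a - z^(p+1) F` for a polynomial `F`, and
`r_B = (r_A (1 - σQ) + zF)/(1 + σA)`. Since `Q`, `A` and `z/r_A` tend to `0` non-tangentially,
`r_B/r_A → 1`, from which all other limits follow by taking real and imaginary parts of
`r_B = (r_B/r_A) r_A`. Dividing by `r_A` is legitimate: a zero of `r_A` in a small cone would, since
`|z/r_A| < 1` there, be an interior point of the zero set, so by the identity theorem `r_A` would
vanish on the whole cone, contradicting the boundary condition.
-/

open Topology Polynomial

def ntCone (κ : ℝ) : Set ℂ := {z : ℂ | z.im < 0 ∧ |z.re| < -κ * z.im}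

lemma coneLower_eq_inter_ball (κ δ : ℝ) : coneLower κ δ = ntCone κ ∩ Metric.ball 0 δ := by
  ext z
  simp [coneLower, ntCone, and_assoc]

lemma coneLower_mono {κ δ δ' : ℝ} (h : δ ≤ δ') : coneLower κ δ ⊆ coneLower κ δ' :=
  fun _ hz => ⟨hz.1, hz.2.1, hz.2.2.trans_le h⟩

lemma coneLower_subset_ntCone {κ δ : ℝ} : coneLower κ δ ⊆ ntCone κ := fun _ hz => ⟨hz.1, hz.2.1⟩

lemma zero_notMem_ntCone (κ : ℝ) : (0 : ℂ) ∉ ntCone κ := fun h => h.1.false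

lemma isOpen_ntCone (κ : ℝ) : IsOpen (ntCone κ) :=
  (isOpen_lt continuous_im continuous_const).inter
    (isOpen_lt (continuous_abs.comp continuous_re) (continuous_const.mul continuous_im))

lemma convex_ntCone (κ : ℝ) : Convex ℝ (ntCone κ) := by
  refine convex_iff_forall_pos.2 fun x ⟨hx, hx'⟩ y ⟨hy, hy'⟩ s t hs ht hst => ?_
  show (s • x + t • y).im < 0 ∧ |(s • x + t • y).re| < -κ * (s • x + t • y).im
  simp only [add_re, add_im, smul_re, smul_im, smul_eq_mul]
  rw [abs_lt] at *
  exact ⟨by nlinarith, by nlinarith, by nlinarith⟩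

lemma nhdsWithin_ntCone_le (κ : ℝ) : 𝓝[ntCone κ] (0 : ℂ) ≤ 𝓝[≠] 0 :=
  nhdsWithin_mono _ fun _ hz h => zero_notMem_ntCone κ (h ▸ hz)

lemma coneLower_mem_nhdsWithin {κ δ : ℝ} (hδ : 0 < δ) : coneLower κ δ ∈ 𝓝[ntCone κ] 0 := by
  rw [coneLower_eq_inter_ball, Set.inter_comm]
  exact Metric.nhdsWithin_basis_ball.mem_of_mem hδ

lemma ntTendsto_iff {f : ℂ → ℂ} {L : ℂ} :
    NTtendsto f L ↔ ∀ κ : ℝ, 0 < κ → Tendsto f (𝓝[ntCone κ] 0) (𝓝 L) := by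
  simp only [NTtendsto, Metric.tendsto_nhdsWithin_nhds, coneLower_eq_inter_ball, Set.mem_inter_iff,
    Metric.mem_ball, dist_eq_norm, sub_zero, and_imp, gt_iff_lt]

lemma tendsto_neg_I_mul_inv_ntCone {κ : ℝ} (hκ : 0 < κ) :
    Tendsto (fun y : ℝ => -I * (y : ℂ)⁻¹) atTop (𝓝[ntCone κ] 0) := by
  refine tendsto_nhdsWithin_iff.2 ⟨?_, ?_⟩
  · simpa using (continuous_ofReal.tendsto 0).comp tendsto_inv_atTop_zero |>.const_mul (-I)
  · filter_upwards [eventually_gt_atTop 0] with y hy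
    simp [ntCone, hy, hκ]

lemma eventually_eq_zero_of_norm_div_lt_one {r : ℂ → ℂ} {z₀ : ℂ} (hr : ContinuousAt r z₀)
    (hz₀ : z₀ ≠ 0) (hrz₀ : r z₀ = 0) (hsmall : ∀ᶠ z in 𝓝 z₀, ‖z / r z‖ < 1) :
    ∀ᶠ z in 𝓝 z₀, r z = 0 := by
  have hgap : Tendsto (fun z => ‖z‖ - ‖r z‖) (𝓝 z₀) (𝓝 (‖z₀‖ - ‖r z₀‖)) :=
    continuous_norm.continuousAt.sub hr.norm
  rw [hrz₀, norm_zero, sub_zero] at hgap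
  filter_upwards [hgap.eventually_const_lt (norm_pos_iff.2 hz₀), hsmall] with z hlt hz
  by_contra hne
  rw [norm_div, div_lt_one (norm_pos_iff.2 hne)] at hz
  linarith

lemma remainder_analyticOnNhd {A : ℂ → ℂ} {U : Set ℂ} (hA : AnalyticOnNhd ℂ A U)
    (hU : (0 : ℂ) ∉ U) (p : ℕ) (a : ℕ → ℝ) : AnalyticOnNhd ℂ (remainder A p a) U := by
  refine (hA.sub (Finset.analyticOnNhd_fun_sum _ fun j _ =>
    analyticOnNhd_const.mul (analyticOnNhd_id.pow j))).div (analyticOnNhd_id.pow p) ?_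
  exact fun z hz => pow_ne_zero _ fun h => hU (h ▸ hz)

lemma eventually_ne_zero_nhdsWithin_ntCone {r : ℂ → ℂ} {κ : ℝ}
    (hr : ∃ δ, 0 < δ ∧ AnalyticOnNhd ℂ r (coneLower κ δ))
    (hsmall : Tendsto (fun z => z / r z) (𝓝[ntCone κ] 0) (𝓝 0))
    (hfreq : ∃ᶠ z in 𝓝[ntCone κ] 0, r z ≠ 0) :
    ∀ᶠ z in 𝓝[ntCone κ] 0, r z ≠ 0 := by
  obtain ⟨δ₁, hδ₁, hr⟩ := hr
  obtain ⟨δ₂, hδ₂, hsmall⟩ := Metric.nhdsWithin_basis_ball.eventually_iff.1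
    (hsmall.eventually (eventually_norm_sub_lt 0 one_pos))
  set δ := min δ₁ δ₂
  have hU : coneLower κ δ = ntCone κ ∩ Metric.ball 0 δ := coneLower_eq_inter_ball κ δ
  have hUr : AnalyticOnNhd ℂ r (coneLower κ δ) := hr.mono (coneLower_mono (min_le_left _ _))
  have hUsmall (z : ℂ) (hz : z ∈ coneLower κ δ) : ‖z / r z‖ < 1 := by
    rw [hU] at hz
    simpa using hsmall ⟨Metric.ball_subset_ball (min_le_right _ _) hz.2, hz.1⟩
  suffices hne : ∀ z ∈ coneLower κ δ, r z ≠ 0 from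
    mem_of_superset (coneLower_mem_nhdsWithin (lt_min hδ₁ hδ₂)) hne
  intro z₀ hz₀ hrz₀
  have hz₀ne : z₀ ≠ 0 := fun h => zero_notMem_ntCone κ (coneLower_subset_ntCone (h ▸ hz₀))
  have hUopen : IsOpen (coneLower κ δ) := hU ▸ (isOpen_ntCone κ).inter Metric.isOpen_ball
  have hzero : EqOn r 0 (coneLower κ δ) :=
    hUr.eqOn_zero_of_preconnected_of_eventuallyEq_zero
      (hU ▸ ((convex_ntCone κ).inter (convex_ball 0 δ)).isPreconnected) hz₀
      (eventually_eq_zero_of_norm_div_lt_one (hUr z₀ hz₀).continuousAt hz₀ne hrz₀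
        (eventually_of_mem (hUopen.mem_nhds hz₀) hUsmall))
  exact hfreq (mem_of_superset (coneLower_mem_nhdsWithin (lt_min hδ₁ hδ₂))
    fun z hz => not_not.2 (hzero hz))

/-- Truncating `P · ∑_{i ≤ n} (-σP)^i` below degree `n + 1` inverts `1 + σP` modulo `X^(n+1)`. -/
lemma exists_natDegree_le_mul_one_add_C_mul_eq {R : Type*} [CommRing R] [Nontrivial R]
    {P : R[X]} (hP : X ∣ P) (σ : R) (n : ℕ) :
    ∃ Q F : R[X], Q.natDegree ≤ n ∧ Q * (1 + C σ * P) = P - X ^ (n + 1) * F := by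
  set x := -(C σ * P)
  have hgeom := geom_sum_mul_neg x (n + 1)
  obtain ⟨E, hE⟩ : X ^ (n + 1) ∣ x ^ (n + 1) :=
    pow_dvd_pow_of_dvd ((dvd_mul_of_dvd_right hP _).neg_right) _
  set S := P * ∑ i ∈ Finset.range (n + 1), x ^ i
  have hS := modByMonic_add_div S (X ^ (n + 1))
  have hX : (X ^ (n + 1) : R[X]) ≠ 1 := fun h => by simpa using congrArg natDegree h
  refine ⟨S %ₘ X ^ (n + 1), P * E + S /ₘ X ^ (n + 1) * (1 + C σ * P),
    Nat.lt_succ_iff.1 ((natDegree_modByMonic_lt S (monic_X_pow _) hX).trans_eq (by simp)), ?_⟩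
  linear_combination (1 + C σ * P) * hS + P * hgeom - P * hE

lemma exists_coeff_mul_one_add_mul_eq (a : ℕ → ℝ) (σ : ℝ) (p : ℕ) :
    ∃ (b : ℕ → ℝ) (F : ℝ[X]), ∀ z : ℂ,
      (∑ j ∈ Finset.Icc 1 p, (b j : ℂ) * z ^ j) * (1 + σ * ∑ j ∈ Finset.Icc 1 p, (a j : ℂ) * z ^ j)
        = ∑ j ∈ Finset.Icc 1 p, (a j : ℂ) * z ^ j - z ^ (p + 1) * aeval z F := by
  set P : ℝ[X] := ∑ j ∈ Finset.Icc 1 p, C (a j) * X ^ j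
  have hP : X ∣ P := Finset.dvd_sum fun j hj =>
    (dvd_pow_self X (by grind)).mul_left _
  obtain ⟨Q, F, hQdeg, hQ⟩ := exists_natDegree_le_mul_one_add_C_mul_eq hP σ p
  have hQ0 : Q.coeff 0 = 0 := by
    simpa [mul_coeff_zero, X_dvd_iff.1 hP] using congrArg (coeff · 0) hQ
  have hQeval (z : ℂ) : aeval z Q = ∑ j ∈ Finset.Icc 1 p, (Q.coeff j : ℂ) * z ^ j := by
    rw [aeval_eq_sum_range' (Nat.lt_succ_of_le hQdeg), Finset.range_eq_Ico,
      Finset.sum_eq_sum_Ico_succ_bot (by omega : 0 < p + 1), zero_add,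
      Finset.Ico_add_one_right_eq_Icc]
    simp [hQ0, Algebra.smul_def]
  refine ⟨Q.coeff, F, fun z => ?_⟩
  simpa [P, hQeval] using congrArg (aeval z) hQ

lemma div_one_add_mul_sub_div_pow {K : Type*} [Field K] {A P Q F z σ : K} {p : ℕ} (hz : z ≠ 0)
    (hA : 1 + σ * A ≠ 0) (hQ : Q * (1 + σ * P) = P - z ^ (p + 1) * F) :
    (A / (1 + σ * A) - Q) / z ^ p = ((A - P) / z ^ p * (1 - σ * Q) + z * F) / (1 + σ * A) := by
  have key : (A - P) / z ^ p * (1 - σ * Q) + z * F = (A - (1 + σ * A) * Q) / z ^ p := by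
    field_simp
    linear_combination hQ
  rw [key, div_sub' hA, div_div, div_div]
  ring

section Remainder

variable {l : Filter ℂ} {A : ℂ → ℂ} {p : ℕ} {a : ℕ → ℝ}

lemma tendsto_sum_Icc_mul_pow_nhds_zero (hl : l ≤ 𝓝 0) (c : ℕ → ℝ) (p : ℕ) :
    Tendsto (fun z : ℂ => ∑ j ∈ Finset.Icc 1 p, (c j : ℂ) * z ^ j) l (𝓝 0) := by
  have hterm (j : ℕ) (hj : j ∈ Finset.Icc 1 p) :
      Tendsto (fun z : ℂ => (c j : ℂ) * z ^ j) l (𝓝 0) := by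
    have h0 : (0 : ℂ) ^ j = 0 := zero_pow (by grind)
    simpa [h0] using tendsto_const_nhds.mul (((continuous_pow j).tendsto 0).mono_left hl)
  simpa using tendsto_finsetSum _ hterm

lemma tendsto_nhds_zero_of_tendsto_remainder (hl : l ≤ 𝓝[≠] 0)
    (hr : Tendsto (remainder A p a) l (𝓝 0)) : Tendsto A l (𝓝 0) := by
  have h0 : l ≤ 𝓝 0 := hl.trans nhdsWithin_le_nhds
  have hA : A =ᶠ[l] fun z =>
      ∑ j ∈ Finset.Icc 1 p, (a j : ℂ) * z ^ j + z ^ p * remainder A p a z := by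
    filter_upwards [hl self_mem_nhdsWithin] with z hz
    rw [remainder, mul_div_cancel₀ _ (pow_ne_zero p hz), add_sub_cancel]
  simpa using ((tendsto_sum_Icc_mul_pow_nhds_zero h0 a p).add
    (((tendsto_id.mono_left h0).pow p).mul hr)).congr' hA.symm

lemma tendsto_remainder_div_one_add_mul_div_remainder (hl : l ≤ 𝓝[≠] 0) {σ : ℝ} {b : ℕ → ℝ}
    {F : ℝ[X]} (hbF : ∀ z : ℂ,
      (∑ j ∈ Finset.Icc 1 p, (b j : ℂ) * z ^ j) * (1 + σ * ∑ j ∈ Finset.Icc 1 p, (a j : ℂ) * z ^ j)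
        = ∑ j ∈ Finset.Icc 1 p, (a j : ℂ) * z ^ j - z ^ (p + 1) * aeval z F)
    (hr : Tendsto (remainder A p a) l (𝓝 0))
    (hzr : Tendsto (fun z => z / remainder A p a z) l (𝓝 0))
    (hne : ∀ᶠ z in l, remainder A p a z ≠ 0) :
    Tendsto (fun z => remainder (fun w => A w / (1 + σ * A w)) p b z / remainder A p a z)
      l (𝓝 1) := by
  have h0 : l ≤ 𝓝 0 := hl.trans nhdsWithin_le_nhds
  have hden : Tendsto (fun z => 1 + (σ : ℂ) * A z) l (𝓝 1) := by
    simpa using ((tendsto_nhds_zero_of_tendsto_remainder hl hr).const_mul (σ : ℂ)).const_add 1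
  have hnum : Tendsto (fun z => 1 - σ * ∑ j ∈ Finset.Icc 1 p, (b j : ℂ) * z ^ j
      + z / remainder A p a z * aeval z F) l (𝓝 1) := by
    simpa using (((tendsto_sum_Icc_mul_pow_nhds_zero h0 b p).const_mul (σ : ℂ)).const_sub 1).add
      (hzr.mul ((F.continuous_aeval.tendsto 0).mono_left h0))
  have hlim := hnum.div hden one_ne_zero
  rw [div_one] at hlim
  refine hlim.congr' ?_
  filter_upwards [hl self_mem_nhdsWithin, hne, hden.eventually_ne one_ne_zero] with z hz hrz hAz
  have hB : remainder (fun w => A w / (1 + σ * A w)) p b z = (remainder A p a z *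
      (1 - σ * ∑ j ∈ Finset.Icc 1 p, (b j : ℂ) * z ^ j) + z * aeval z F) / (1 + σ * A z) :=
    div_one_add_mul_sub_div_pow hz hAz (hbF z)
  rw [Pi.div_apply, hB]
  field_simp

end Remainder

section ReIm

variable {α : Type*} {l : Filter α} {s t : α → ℂ} {L : ℝ}

lemma eventually_re_ne_zero_and_im_ne_zero (hL : L ≠ 0)
    (hs : Tendsto (fun x => (s x).re / (s x).im) l (𝓝 L)) :
    ∀ᶠ x in l, (s x).re ≠ 0 ∧ (s x).im ≠ 0 := by
  filter_upwards [hs.eventually_ne hL] with x hx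
  exact ⟨fun h => hx (by simp [h]), fun h => hx (by simp [h])⟩

lemma tendsto_re_div_and_im_div_of_tendsto_div_nhds_one (hL : L ≠ 0)
    (hts : Tendsto (fun x => t x / s x) l (𝓝 1))
    (hs : Tendsto (fun x => (s x).re / (s x).im) l (𝓝 L)) :
    Tendsto (fun x => (t x).re / (t x).im) l (𝓝 L) ∧
      Tendsto (fun x => (t x).re / (s x).re) l (𝓝 1) ∧
      Tendsto (fun x => (t x).im / (s x).im) l (𝓝 1) := by
  have hu : Tendsto (fun x => (t x / s x).re) l (𝓝 1) := by
    simpa [Function.comp_def] using (continuous_re.tendsto 1).comp hts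
  have hv : Tendsto (fun x => (t x / s x).im) l (𝓝 0) := by
    simpa [Function.comp_def] using (continuous_im.tendsto 1).comp hts
  have hne := eventually_re_ne_zero_and_im_ne_zero hL hs
  have hmul : ∀ᶠ x in l, t x = t x / s x * s x := by
    filter_upwards [hne] with x hx
    exact (div_mul_cancel₀ _ fun h => hx.1 (by simp [h])).symm
  have him : Tendsto (fun x => (t x).im / (s x).im) l (𝓝 1) := by
    have hlim := hu.add (hv.mul hs)
    rw [zero_mul, add_zero] at hlim
    refine hlim.congr' ?_
    filter_upwards [hne, hmul] with x hx hx'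
    rw [hx', mul_im]
    field_simp [hx.2]
  have hreim : Tendsto (fun x => (t x).re / (s x).im) l (𝓝 L) := by
    have hlim := (hu.mul hs).sub hv
    rw [one_mul, sub_zero] at hlim
    refine hlim.congr' ?_
    filter_upwards [hne, hmul] with x hx hx'
    rw [hx', mul_re]
    field_simp [hx.2]
  have hreim_im := hreim.div him one_ne_zero
  have hreim_re := hreim.div hs hL
  rw [div_one] at hreim_im
  rw [div_self hL] at hreim_re
  refine ⟨hreim_im.congr' ?_, hreim_re.congr' ?_, him⟩ <;>
  filter_upwards [hne] with x hx using div_div_div_cancel_right₀ hx.2 _ _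

end ReIm

section Ratio

variable {α 𝕜 : Type*} [NormedField 𝕜] {l : Filter α} {g s t : α → 𝕜}

lemma tendsto_nhds_zero_of_tendsto_div_nhds_one (hts : Tendsto (fun x => t x / s x) l (𝓝 1))
    (hs : Tendsto s l (𝓝 0)) : Tendsto t l (𝓝 0) := by
  have hlim := hts.mul hs
  rw [mul_zero] at hlim
  refine hlim.congr' ?_
  filter_upwards [hts.eventually_ne one_ne_zero] with x hx
  exact div_mul_cancel₀ _ (right_ne_zero_of_mul (by simpa [div_eq_mul_inv] using hx))

lemma tendsto_div_nhds_zero_of_tendsto_div_nhds_one (hts : Tendsto (fun x => t x / s x) l (𝓝 1))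
    (hg : Tendsto (fun x => g x / s x) l (𝓝 0)) : Tendsto (fun x => g x / t x) l (𝓝 0) := by
  have hlim := hg.div hts one_ne_zero
  rw [zero_div] at hlim
  refine hlim.congr' ?_
  filter_upwards [hts.eventually_ne one_ne_zero] with x hx
  exact div_div_div_cancel_right₀ (fun h => hx (by simp [h])) _ _

end Ratio

theorem Z1p_stable_under_moebius_general
    (p : ℕ) (A : ℂ → ℂ)
    (hanal : ∀ κ : ℝ, 0 < κ → ∃ δ : ℝ, 0 < δ ∧ AnalyticOnNhd ℂ A (coneLower κ δ))
    (a : ℕ → ℝ)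
    (hR2a : NTtendsto (fun z : ℂ => z / remainder A p a z) 0)
    (hR2b : NTtendsto (remainder A p a) 0)
    (hR3 : ∃ L : ℝ, L ≠ 0 ∧
      Filter.Tendsto
        (fun y : ℝ => (ntEval (remainder A p a) y).re / (ntEval (remainder A p a) y).im)
        Filter.atTop (nhds L))
    (B : ℂ → ℂ)
    (hB : B = (fun z : ℂ => A z / (1 + A z)) ∨ B = (fun z : ℂ => A z / (1 - A z))) :
    ∃ b : ℕ → ℝ,
      NTtendsto (fun z : ℂ => z / remainder B p b z) 0 ∧
      NTtendsto (remainder B p b) 0 ∧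
      (∃ L : ℝ, L ≠ 0 ∧
        Filter.Tendsto
          (fun y : ℝ => (ntEval (remainder B p b) y).re / (ntEval (remainder B p b) y).im)
          Filter.atTop (nhds L)) ∧
      NTtendsto (fun z : ℂ => remainder B p b z / remainder A p a z) 1 ∧
      Filter.Tendsto
        (fun y : ℝ => (ntEval (remainder B p b) y).re / (ntEval (remainder A p a) y).re)
        Filter.atTop (nhds 1) ∧
      Filter.Tendsto
        (fun y : ℝ => (ntEval (remainder B p b) y).im / (ntEval (remainder A p a) y).im)
        Filter.atTop (nhds 1) := by
  obtain ⟨σ, rfl⟩ : ∃ σ : ℝ, B = fun z => A z / (1 + σ * A z) := by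
    rcases hB with rfl | rfl
    · exact ⟨1, by simp⟩
    · exact ⟨-1, by simp [sub_eq_add_neg]⟩
  obtain ⟨b, F, hbF⟩ := exists_coeff_mul_one_add_mul_eq a σ p
  obtain ⟨L, hL, hLim⟩ := hR3
  rw [ntTendsto_iff] at hR2a hR2b
  have hne (κ : ℝ) (hκ : 0 < κ) : ∀ᶠ z in 𝓝[ntCone κ] 0, remainder A p a z ≠ 0 := by
    obtain ⟨δ, hδ, hA⟩ := hanal κ hκ
    have haxis : ∀ᶠ y : ℝ in atTop, remainder A p a (-I * (y : ℂ)⁻¹) ≠ 0 := by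
      filter_upwards [eventually_re_ne_zero_and_im_ne_zero hL hLim] with y hy h
      exact hy.1 (by rw [ntEval, h, zero_re])
    exact eventually_ne_zero_nhdsWithin_ntCone ⟨δ, hδ, remainder_analyticOnNhd hA
      (fun h => zero_notMem_ntCone κ (coneLower_subset_ntCone h)) p a⟩ (hR2a κ hκ)
      ((tendsto_neg_I_mul_inv_ntCone hκ).frequently haxis.frequently)
  have hratio (κ : ℝ) (hκ : 0 < κ) :=
    tendsto_remainder_div_one_add_mul_div_remainder (nhdsWithin_ntCone_le κ) hbF (hR2b κ hκ)
      (hR2a κ hκ) (hne κ hκ)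
  obtain ⟨hReIm, hRe, hIm⟩ := tendsto_re_div_and_im_div_of_tendsto_div_nhds_one hL
    ((hratio 1 one_pos).comp (tendsto_neg_I_mul_inv_ntCone one_pos)) hLim
  exact ⟨b,
    ntTendsto_iff.2 fun κ hκ =>
      tendsto_div_nhds_zero_of_tendsto_div_nhds_one (hratio κ hκ) (hR2a κ hκ),
    ntTendsto_iff.2 fun κ hκ =>
      tendsto_nhds_zero_of_tendsto_div_nhds_one (hratio κ hκ) (hR2b κ hκ),
    ⟨L, hL, hReIm⟩, ntTendsto_iff.2 hratio, hRe, hIm⟩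

/-- stability of the class `Z_{1,p}` under `A ↦ A/(1 ± A)`. -/
theorem Z1p_stable_under_moebius
    (p : ℕ) (hp : 1 ≤ p) (A : ℂ → ℂ)
    (hanal : ∀ κ : ℝ, 0 < κ → ∃ δ : ℝ, 0 < δ ∧ AnalyticOnNhd ℂ A (coneLower κ δ))
    (a : ℕ → ℝ)
    (hR2a : NTtendsto (fun z : ℂ => z / remainder A p a z) 0)
    (hR2b : NTtendsto (remainder A p a) 0)
    (hR3 : ∃ L : ℝ, L ≠ 0 ∧
      Filter.Tendsto
        (fun y : ℝ => (ntEval (remainder A p a) y).re / (ntEval (remainder A p a) y).im)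
        Filter.atTop (nhds L))
    (B : ℂ → ℂ)
    (hB : B = (fun z : ℂ => A z / (1 + A z)) ∨ B = (fun z : ℂ => A z / (1 - A z))) :
    ∃ b : ℕ → ℝ,
      NTtendsto (fun z : ℂ => z / remainder B p b z) 0 ∧
      NTtendsto (remainder B p b) 0 ∧
      (∃ L : ℝ, L ≠ 0 ∧
        Filter.Tendsto
          (fun y : ℝ => (ntEval (remainder B p b) y).re / (ntEval (remainder B p b) y).im)
          Filter.atTop (nhds L)) ∧
      NTtendsto (fun z : ℂ => remainder B p b z / remainder A p a z) 1 ∧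
      Filter.Tendsto
        (fun y : ℝ => (ntEval (remainder B p b) y).re / (ntEval (remainder A p a) y).re)
        Filter.atTop (nhds 1) ∧
      Filter.Tendsto
        (fun y : ℝ => (ntEval (remainder B p b) y).im / (ntEval (remainder A p a) y).im)
        Filter.atTop (nhds 1) :=
  Z1p_stable_under_moebius_general p A hanal a hR2a hR2b hR3 B hB
end
end
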